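/- arXiv:2106.09798 — 2 statements merged into one kernel-verified Lean document; each statement's English description precedes it below -/
import Mathlib

section
/- Let Y ∼ N(M, Q) be a q-dimensional Gaussian vector with positive-definite covariance Q, and write Y = AX + M where A is the lower-triangular Cholesky factor of Q and X ∼ N(0, Id). Define, for i < q, X̃ᵢ = ∑_{i'=1}^{q−1} ((A_{ii'} − A_{qi'})/A_{qq})·X_{i'} + (Mᵢ − M_q)/A_{qq}. Then P(Y_q > max_{i<q} Yᵢ) = E[ψ(max_{i<q} X̃ᵢ)], where ψ(u) = (1/2)(1 − erf(u/√2)). -/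
open MeasureTheory ProbabilityTheory Matrix Real

/-- The Gauss error function `erf x = (2/√π) ∫₀ˣ e^{-t²} dt`. -/
noncomputable def erf (x : ℝ) : ℝ :=
  (2 / Real.sqrt Real.pi) * ∫ t in (0:ℝ)..x, Real.exp (-t ^ 2)

/-- `ψ(u) = (1/2)(1 - erf(u/√2)) = P(ζ > u)` for `ζ ∼ N(0,1)`. -/
noncomputable def psi (u : ℝ) : ℝ := (1 / 2) * (1 - erf (u / Real.sqrt 2))

lemma gaussianPDFReal_zero_one :
    gaussianPDFReal 0 1 = fun x => (Real.sqrt (2 * π))⁻¹ * Real.exp (-(1/2) * x ^ 2) := by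
  ext x
  simp only [gaussianPDFReal, NNReal.coe_one, mul_one, sub_zero]
  ring_nf

lemma exp_half_sq (x : ℝ) : Real.exp (-(x / Real.sqrt 2) ^ 2) = Real.exp (-(1/2) * x ^ 2) := by
  congr 1
  rw [div_pow, Real.sq_sqrt (by norm_num : (0:ℝ) ≤ 2)]
  ring

lemma integral_Ioi_gauss (z : ℝ) :
    ∫ x in Set.Ioi z, Real.exp (-(1/2) * x ^ 2)
      = Real.sqrt (2 * π) / 2 - Real.sqrt 2 * ∫ t in (0:ℝ)..(z / Real.sqrt 2), Real.exp (-t ^ 2) := by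
  have hint : Integrable (fun x => Real.exp (-(1/2) * x ^ 2)) := integrable_exp_neg_mul_sq (by norm_num)
  have htot : ∫ x : ℝ, Real.exp (-(1/2) * x ^ 2) = Real.sqrt (2 * π) := by
    rw [integral_gaussian]; rw [show π / (1/2) = 2*π by ring]
  have hIoi0 : ∫ x in Set.Ioi (0:ℝ), Real.exp (-(1/2) * x ^ 2) = Real.sqrt (2 * π) / 2 := by
    rw [integral_gaussian_Ioi]; rw [show π / (1/2) = 2*π by ring]
  have hIic0 : ∫ x in Set.Iic (0:ℝ), Real.exp (-(1/2) * x ^ 2) = Real.sqrt (2 * π) / 2 := by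
    have h := integral_comp_neg_Iic (0:ℝ) (fun x => Real.exp (-(1/2) * x ^ 2))
    simp only [neg_zero, neg_sq] at h
    rw [h, hIoi0]
  have hIic : ∫ x in Set.Iic z, Real.exp (-(1/2) * x ^ 2)
      = Real.sqrt (2 * π) / 2 + ∫ x in (0:ℝ)..z, Real.exp (-(1/2) * x ^ 2) := by
    have := intervalIntegral.integral_Iic_sub_Iic (μ := volume) (a := (0:ℝ)) (b := z)
      (hint.integrableOn) (hint.integrableOn)
    rw [hIic0] at this
    linarith
  have hIoi : ∫ x in Set.Ioi z, Real.exp (-(1/2) * x ^ 2)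
      = Real.sqrt (2 * π) / 2 - ∫ x in (0:ℝ)..z, Real.exp (-(1/2) * x ^ 2) := by
    have := intervalIntegral.integral_Iic_add_Ioi (μ := volume) (b := z)
      (f := fun x => Real.exp (-(1/2) * x ^ 2)) hint.integrableOn hint.integrableOn
    rw [htot] at this
    linarith
  rw [hIoi]
  congr 1
  have h2 : Real.sqrt 2 ≠ 0 := by positivity
  have hsub := intervalIntegral.integral_comp_div (a := (0:ℝ)) (b := z)
    (f := fun t => Real.exp (-t ^ 2)) h2
  simp only [exp_half_sq, zero_div] at hsub
  rw [smul_eq_mul] at hsub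
  rw [hsub]

lemma psi_eq_integral (z : ℝ) :
    ∫ x in Set.Ioi z, gaussianPDFReal 0 1 x = psi z := by
  rw [gaussianPDFReal_zero_one]
  rw [MeasureTheory.integral_const_mul, integral_Ioi_gauss]
  have hπ : Real.sqrt π ≠ 0 := by positivity
  have h2 : (0:ℝ) < Real.sqrt 2 := by positivity
  have h2π : Real.sqrt (2 * π) = Real.sqrt 2 * Real.sqrt π := Real.sqrt_mul (by norm_num) _
  rw [psi, erf, h2π]
  field_simp

lemma gaussianReal_Ioi (z : ℝ) :
    gaussianReal 0 1 (Set.Ioi z) = ENNReal.ofReal (psi z) := by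
  rw [gaussianReal_apply_eq_integral 0 one_ne_zero, psi_eq_integral]

lemma psi_nonneg (z : ℝ) : 0 ≤ psi z := by
  rw [← psi_eq_integral]
  exact setIntegral_nonneg measurableSet_Ioi fun x _ => gaussianPDFReal_nonneg 0 1 x

lemma psi_le_one (z : ℝ) : psi z ≤ 1 := by
  rw [← psi_eq_integral, ← integral_gaussianPDFReal_eq_one 0 one_ne_zero]
  exact setIntegral_le_integral (integrable_gaussianPDFReal 0 1)
    (Filter.Eventually.of_forall fun x => gaussianPDFReal_nonneg 0 1 x)

lemma psi_antitone : Antitone psi := by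
  intro a b hab
  rw [← psi_eq_integral, ← psi_eq_integral]
  exact setIntegral_mono_set (integrable_gaussianPDFReal 0 1).integrableOn
    (Filter.Eventually.of_forall fun x => gaussianPDFReal_nonneg 0 1 x)
    (Filter.Eventually.of_forall <| Set.Ioi_subset_Ioi hab)

lemma psi_measurable : Measurable psi := psi_antitone.measurable

lemma measurable_finset_sup' {δ ι : Type*} [MeasurableSpace δ] (s : Finset ι)
    (hs : s.Nonempty) (f : ι → δ → ℝ) (hf : ∀ i, Measurable (f i)) :
    Measurable fun a => s.sup' hs fun i => f i a := by
  induction hs using Finset.Nonempty.cons_induction with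
  | singleton i => simp only [Finset.sup'_singleton]; exact hf i
  | cons i s hi hs ih =>
      simp only [Finset.sup'_cons hs]
      exact (hf i).sup ih


theorem prob_last_is_max_eq_expectation
    {Ω : Type*} [MeasurableSpace Ω] (P : Measure Ω) [IsProbabilityMeasure P]
    (n : ℕ) (hn : 0 < n)
    (X : Fin (n + 1) → Ω → ℝ) (hXmeas : ∀ i, Measurable (X i))
    (hXindep : iIndepFun X P)
    (hXlaw : ∀ i, P.map (X i) = gaussianReal 0 1)
    (A : Matrix (Fin (n + 1)) (Fin (n + 1)) ℝ) (Q : Matrix (Fin (n + 1)) (Fin (n + 1)) ℝ)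
    (hQ : Q.PosDef) (hChol : Q = A * Aᵀ)
    (hLow : ∀ i j, i < j → A i j = 0) (hAqq : 0 < A (Fin.last n) (Fin.last n))
    (M : Fin (n + 1) → ℝ)
    (Y : Ω → Fin (n + 1) → ℝ)
    (hY : ∀ ω i, Y ω i = (∑ i', A i i' * X i' ω) + M i)
    (Xt : Ω → Fin n → ℝ)
    (hXt : ∀ ω i, Xt ω i =
      (∑ i' : Fin n,
        ((A i.castSucc i'.castSucc - A (Fin.last n) i'.castSucc)
            / A (Fin.last n) (Fin.last n)) * X i'.castSucc ω)
      + (M i.castSucc - M (Fin.last n)) / A (Fin.last n) (Fin.last n)) :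
    P {ω | ∀ i : Fin n, Y ω i.castSucc < Y ω (Fin.last n)}
      = ENNReal.ofReal
          (∫ ω, psi ((Finset.univ.sup' (Finset.univ_nonempty_iff.mpr
              (Fin.pos_iff_nonempty.mp hn)) fun i : Fin n => Xt ω i)) ∂P) := by
  have hne : (Finset.univ : Finset (Fin n)).Nonempty :=
    Finset.univ_nonempty_iff.mpr (Fin.pos_iff_nonempty.mp hn)
  set q := Fin.last n with hq
  set Z : Ω → ℝ := fun ω => Finset.univ.sup' hne fun i : Fin n => Xt ω i with hZ
  -- pointwise equivalence
  have hpt : ∀ ω (i : Fin n), (Y ω i.castSucc < Y ω q ↔ Xt ω i < X q ω) := by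
    intro ω i
    have hsplit : ∀ j, (∑ i', A j i' * X i' ω)
        = (∑ i' : Fin n, A j i'.castSucc * X i'.castSucc ω) + A j q * X q ω :=
      fun j => Fin.sum_univ_castSucc fun i' => A j i' * X i' ω
    rw [hY, hY, hXt, hsplit, hsplit, hLow i.castSucc q (Fin.castSucc_lt_last i), zero_mul,
      add_zero]
    have hXtform : (∑ i' : Fin n,
          ((A i.castSucc i'.castSucc - A q i'.castSucc) / A q q) * X i'.castSucc ω)
        + (M i.castSucc - M q) / A q q
        = ((∑ i' : Fin n, (A i.castSucc i'.castSucc - A q i'.castSucc) * X i'.castSucc ω)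
            + (M i.castSucc - M q)) / A q q := by
      rw [add_div, Finset.sum_div]
      congr 1
      exact Finset.sum_congr rfl fun j _ => by rw [div_mul_eq_mul_div]
    rw [hXtform, div_lt_iff₀ hAqq]
    have hsum : ∑ i' : Fin n, (A i.castSucc i'.castSucc - A q i'.castSucc) * X i'.castSucc ω
        = (∑ i' : Fin n, A i.castSucc i'.castSucc * X i'.castSucc ω)
          - (∑ i' : Fin n, A q i'.castSucc * X i'.castSucc ω) := by
      rw [← Finset.sum_sub_distrib]
      exact Finset.sum_congr rfl fun j _ => by ring
    rw [hsum, mul_comm]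
    constructor <;> intro h <;> linarith
  have hset : {ω | ∀ i : Fin n, Y ω i.castSucc < Y ω q} = {ω | Z ω < X q ω} := by
    ext ω
    simp only [Set.mem_setOf_eq, hZ, Finset.sup'_lt_iff]
    constructor
    · intro h i _
      exact (hpt ω i).mp (h i)
    · intro h i
      exact (hpt ω i).mpr (h i (Finset.mem_univ i))
  -- independence
  set S : Finset (Fin (n + 1)) := Finset.univ.image Fin.castSucc with hS
  set T : Finset (Fin (n + 1)) := {q} with hT
  have hST : Disjoint S T := by
    simp only [hS, hT, Finset.disjoint_right, Finset.mem_singleton, Finset.mem_image]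
    rintro a rfl ⟨i, -, hcontra⟩
    exact absurd hcontra (Fin.castSucc_lt_last i).ne
  have hmem : ∀ i : Fin n, i.castSucc ∈ S := fun i =>
    Finset.mem_image_of_mem _ (Finset.mem_univ i)
  set F : (↥S → ℝ) → ℝ := fun v => Finset.univ.sup' hne fun i : Fin n =>
    (∑ i' : Fin n, ((A i.castSucc i'.castSucc - A q i'.castSucc) / A q q)
        * v ⟨i'.castSucc, hmem i'⟩)
      + (M i.castSucc - M q) / A q q with hFdef
  set G : (↥T → ℝ) → ℝ := fun v => v ⟨q, Finset.mem_singleton_self _⟩ with hGdef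
  have hF : Measurable F := by
    refine measurable_finset_sup' _ hne _ fun i => Measurable.add_const ?_ _
    refine Finset.measurable_sum _ fun j _ => ?_
    exact (measurable_pi_apply _).const_mul _
  have hG : Measurable G := measurable_pi_apply _
  have hZeq : (F ∘ fun ω (i : ↥S) => X i ω) = Z := by
    funext ω
    exact Finset.sup'_congr hne rfl fun i _ => (hXt ω i).symm
  have hindep : IndepFun Z (X q) P := by
    rw [← hZeq]
    exact (hXindep.indepFun_finset S T hST hXmeas).comp hF hG
  have hW : Measurable (fun ω (i : ↥S) => X i ω) := measurable_pi_lambda _ fun i => hXmeas i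
  have hZm : Measurable Z := hZeq ▸ hF.comp hW
  have : IsProbabilityMeasure (P.map Z) := Measure.isProbabilityMeasure_map hZm.aemeasurable
  have hint : Integrable psi (P.map Z) := by
    refine (integrable_const (1 : ℝ)).mono' psi_measurable.aestronglyMeasurable
      (Filter.Eventually.of_forall fun z => ?_)
    rw [Real.norm_eq_abs, abs_of_nonneg (psi_nonneg z)]
    exact psi_le_one z
  calc P {ω | ∀ i : Fin n, Y ω i.castSucc < Y ω q}
      = P.map (fun ω => (Z ω, X q ω)) {p : ℝ × ℝ | p.1 < p.2} := by
        rw [Measure.map_apply (hZm.prodMk (hXmeas q))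
          (measurableSet_lt measurable_fst measurable_snd), hset]
        rfl
    _ = ((P.map Z).prod (gaussianReal 0 1)) {p : ℝ × ℝ | p.1 < p.2} := by
        rw [← hXlaw q,
          ← (indepFun_iff_map_prod_eq_prod_map_map hZm.aemeasurable
            (hXmeas q).aemeasurable).mp hindep]
    _ = ∫⁻ z, gaussianReal 0 1 (Set.Ioi z) ∂(P.map Z) := by
        rw [Measure.prod_apply (measurableSet_lt measurable_fst measurable_snd)]
        congr 1
    _ = ∫⁻ z, ENNReal.ofReal (psi z) ∂(P.map Z) := by
        simp_rw [gaussianReal_Ioi]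
    _ = ENNReal.ofReal (∫ z, psi z ∂(P.map Z)) :=
        (ofReal_integral_eq_lintegral_ofReal hint
          (Filter.Eventually.of_forall psi_nonneg)).symm
    _ = ENNReal.ofReal (∫ ω, psi (Z ω) ∂P) := by
        rw [integral_map hZm.aemeasurable psi_measurable.aestronglyMeasurable]
end

section
/- Define kl(u‖v) = u·log(u/v) + (1−u)·log((1−u)/(1−v)) for u, v ∈ (0,1), and kl⁻¹(u|c) = sup{v ∈ [0,1] : kl(u‖v) ≤ c}. Then for fixed c ≥ 0, the map u ↦ kl⁻¹(u|c) is monotone non-decreasing on (0,1). -/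
/-- One term `a·log(a/b)` of the Bernoulli KL, with the conventions
`0·log 0 = 0` and value `⊤` when `b = 0 ≠ a`. -/
noncomputable def klTerm (a b : ℝ) : EReal :=
  if a = 0 then 0 else if b = 0 then ⊤ else ((a * Real.log (a / b) : ℝ) : EReal)

/-- KL divergence between Bernoulli distributions of means `u` and `v`:
`kl(u‖v) = u log(u/v) + (1−u) log((1−u)/(1−v))`. -/
noncomputable def bernKL (u v : ℝ) : EReal := klTerm u v + klTerm (1 - u) (1 - v)

/-- `kl⁻¹(u|c) = sup {v ∈ [0,1] : kl(u‖v) ≤ c}`. -/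
noncomputable def klInv (u c : ℝ) : ℝ :=
  sSup {v | v ∈ Set.Icc (0:ℝ) 1 ∧ bernKL u v ≤ (c : EReal)}

/-- Real-valued Bernoulli KL, valid on the interior of the square. -/
noncomputable def klReal (u v : ℝ) : ℝ :=
  u * Real.log (u / v) + (1 - u) * Real.log ((1 - u) / (1 - v))

lemma bernKL_eq (u v : ℝ) (hu : u ∈ Set.Ioo (0:ℝ) 1) (hv : v ∈ Set.Ioo (0:ℝ) 1) :
    bernKL u v = ((klReal u v : ℝ) : EReal) := by
  obtain ⟨hu0, hu1⟩ := hu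
  obtain ⟨hv0, hv1⟩ := hv
  rw [bernKL, klTerm, klTerm, if_neg hu0.ne', if_neg hv0.ne',
    if_neg (by linarith : (1:ℝ) - u ≠ 0), if_neg (by linarith : (1:ℝ) - v ≠ 0)]
  rw [← EReal.coe_add]; rfl

lemma bernKL_self (u : ℝ) (hu : u ∈ Set.Ioo (0:ℝ) 1) : bernKL u u = 0 := by
  rw [bernKL_eq u u hu hu, klReal, div_self hu.1.ne', div_self (by linarith [hu.2] : (1:ℝ) - u ≠ 0),
    Real.log_one, mul_zero, mul_zero, add_zero]
  rfl

lemma bernKL_one (u : ℝ) (hu : u ∈ Set.Ioo (0:ℝ) 1) : bernKL u 1 = ⊤ := by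
  rw [bernKL, klTerm, klTerm, if_neg hu.1.ne', if_neg one_ne_zero,
    if_neg (by linarith [hu.2] : (1:ℝ) - u ≠ 0), if_pos (by ring)]
  exact EReal.add_top_of_ne_bot (EReal.coe_ne_bot _)

lemma hasDerivAt_klReal (v t : ℝ) (hv0 : 0 < v) (hv1 : v < 1) (ht0 : 0 < t) (ht1 : t < 1) :
    HasDerivAt (fun t => klReal t v)
      (Real.log (t / v) - Real.log ((1 - t) / (1 - v))) t := by
  have h1 : HasDerivAt (fun t : ℝ => t * Real.log (t / v))
      (Real.log (t / v) + 1) t := by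
    have := (Real.hasDerivAt_log (x := t / v) (ne_of_gt (div_pos ht0 hv0))).comp t
      ((hasDerivAt_id t).div_const v)
    have h : HasDerivAt (fun t : ℝ => t * Real.log (t / v)) _ t := (hasDerivAt_id t).mul this
    simp only [id] at h ⊢
    convert h using 1
    field_simp
  have h2 : HasDerivAt (fun t : ℝ => (1 - t) * Real.log ((1 - t) / (1 - v)))
      (-(Real.log ((1 - t) / (1 - v))) - 1) t := by
    have hd : HasDerivAt (fun t : ℝ => (1 - t)) (-1) t := by
      simpa using (hasDerivAt_id t).const_sub (1:ℝ)
    have := (Real.hasDerivAt_log (x := (1 - t) / (1 - v))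
      (ne_of_gt (div_pos (by linarith) (by linarith)))).comp t (hd.div_const (1 - v))
    have h : HasDerivAt (fun t : ℝ => (1 - t) * Real.log ((1 - t) / (1 - v))) _ t := hd.mul this
    convert h using 1
    have h1t : (1:ℝ) - t ≠ 0 := by linarith
    have h1v : (1:ℝ) - v ≠ 0 := by linarith
    field_simp
    ring
  have : HasDerivAt (fun t => klReal t v) _ t := h1.add h2
  convert this using 1
  ring

lemma klReal_anti (v : ℝ) (hv : v ∈ Set.Ioo (0:ℝ) 1) :
    AntitoneOn (fun t => klReal t v) (Set.Ioc 0 v) := by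
  obtain ⟨hv0, hv1⟩ := hv
  apply antitoneOn_of_deriv_nonpos (convex_Ioc 0 v)
  · intro t ht
    exact (hasDerivAt_klReal v t hv0 hv1 ht.1 (lt_of_le_of_lt ht.2 hv1)
      ).continuousAt.continuousWithinAt
  · rw [interior_Ioc]
    intro t ht
    exact (hasDerivAt_klReal v t hv0 hv1 ht.1 (lt_trans ht.2 hv1)
      ).differentiableAt.differentiableWithinAt
  · rw [interior_Ioc]
    intro t ht
    rw [(hasDerivAt_klReal v t hv0 hv1 ht.1 (lt_trans ht.2 hv1)).deriv]
    have hA : Real.log (t / v) ≤ 0 :=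
      Real.log_nonpos (div_nonneg ht.1.le hv0.le) ((div_le_one hv0).2 ht.2.le)
    have hB : 0 ≤ Real.log ((1 - t) / (1 - v)) :=
      Real.log_nonneg ((one_le_div (by linarith)).2 (by linarith [ht.2]))
    linarith

theorem klInv_monotone (c : ℝ) (hc : 0 ≤ c) :
    MonotoneOn (fun u => klInv u c) (Set.Ioo (0:ℝ) 1) := by
  intro u hu u' hu' huu'
  simp only [klInv]
  set S : ℝ → Set ℝ := fun w => {v | v ∈ Set.Icc (0:ℝ) 1 ∧ bernKL w v ≤ (c : EReal)}
  have hmem : u' ∈ S u' := by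
    refine ⟨⟨hu'.1.le, hu'.2.le⟩, ?_⟩
    rw [bernKL_self u' hu']
    exact_mod_cast hc
  have hbdd : BddAbove (S u') := ⟨1, fun x hx => hx.1.2⟩
  have hle : u' ≤ sSup (S u') := le_csSup hbdd hmem
  apply Real.sSup_le _ (le_trans hu'.1.le hle)
  intro v hv
  rcases le_or_gt v u' with h | h
  · exact h.trans hle
  · have hv1 : v < 1 := by
      rcases lt_or_eq_of_le hv.1.2 with h1 | h1
      · exact h1
      · exfalso
        have := hv.2
        rw [h1, bernKL_one u hu] at this
        exact absurd this (by simp [top_le_iff])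
    have hvI : v ∈ Set.Ioo (0:ℝ) 1 := ⟨lt_trans hu'.1 h, hv1⟩
    have hanti := klReal_anti v hvI
    have huIoc : u ∈ Set.Ioc (0:ℝ) v := ⟨hu.1, le_of_lt (lt_of_le_of_lt huu' h)⟩
    have hu'Ioc : u' ∈ Set.Ioc (0:ℝ) v := ⟨hu'.1, h.le⟩
    have hkey : klReal u' v ≤ klReal u v := hanti huIoc hu'Ioc huu'
    refine le_csSup hbdd ⟨hv.1, ?_⟩
    rw [bernKL_eq u' v hu' hvI]
    calc ((klReal u' v : ℝ) : EReal) ≤ ((klReal u v : ℝ) : EReal) := by exact_mod_cast hkey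
      _ = bernKL u v := (bernKL_eq u v hu hvI).symm
      _ ≤ (c : EReal) := hv.2
end
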